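/- arXiv:1303.5925 — 3 statements merged into one kernel-verified Lean document; each statement's English description precedes it below -/
import Mathlib

section
/- Let g be a finite-dimensional real solvable Lie algebra and let k = [m,m] where g = m ⊕ h is the eigenspace decomposition of an involutive automorphism σ (m the (−1)-eigenspace, h the (+1)-eigenspace) and k ⊆ h. If k is contained in the nilradical of g, then for every X = X_k + X_m with X_k ∈ k and X_m ∈ m, the characteristic polynomial of ad(X) equals that of ad(X_m); in particular ad(X) has a purely imaginary nonzero eigenvalue only if ad(X_m) does. -/
/-!
Since `Xk` lies in the nilpotent ideal `N`, the filtration `g ⊇ ⁅N, g⁆ ⊇ ⁅N, ⁅N, g⁆⁆ ⊇ ⋯` reaches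
`0` (its `(i+1)`-st term lies in the `i`-th term of the lower central series of `N`). Its terms are
ideals, so `ad X` and `ad Xm` preserve it, and `ad X - ad Xm = ad Xk` pushes each term into the
next one. Hence `ad X` and `ad Xm` induce the same maps on the successive quotients, and the
characteristic polynomial of an endomorphism is the product of those it induces on an invariant
submodule and on the quotient by it.
-/

open Module.Basis in
theorem LinearMap.charpoly_eq_charpoly_restrict_mul_charpoly_mapQ
    {R V : Type*} [CommRing R] [AddCommGroup V] [Module R V] [Module.Free R V] [Module.Finite R V]
    (W : Submodule R V) [Module.Free R W] [Module.Finite R W] [Module.Free R (V ⧸ W)]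
    (e : V →ₗ[R] V) (he : W ≤ W.comap e) :
    e.charpoly = (e.restrict he).charpoly * (W.mapQ W e he).charpoly := by
  let bW := Module.Free.chooseBasis R W
  let bQ := Module.Free.chooseBasis R (V ⧸ W)
  let b := sumQuot bW bQ
  let B : Matrix _ _ R := Matrix.of fun i l ↦ (b.repr (e (b (Sum.inr l)))) (Sum.inl i)
  suffices LinearMap.toMatrix b b e =
      Matrix.fromBlocks (LinearMap.toMatrix bW bW (e.restrict he)) B 0
        (LinearMap.toMatrix bQ bQ (W.mapQ W e he)) by
    rw [← LinearMap.charpoly_toMatrix e b, this, Matrix.charpoly_fromBlocks_zero₂₁,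
      LinearMap.charpoly_toMatrix, LinearMap.charpoly_toMatrix]
  ext (i | j) (k | l)
  · simp only [b, sumQuot_inl, Matrix.fromBlocks_apply₁₁, LinearMap.toMatrix_apply]
    apply sumQuot_repr_inl_of_mem
  · simp [b, LinearMap.toMatrix_apply, Matrix.fromBlocks_apply₁₂, B]
  · suffices W.mkQ (e (bW k)) = 0 by simp [LinearMap.toMatrix_apply, b, this]
    rw [← LinearMap.mem_ker, Submodule.ker_mkQ]
    exact he (Submodule.coe_mem (bW k))
  · simp only [LinearMap.toMatrix_apply, sumQuot_repr_inr, Matrix.fromBlocks_apply₂₂, b]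
    rw [← sumQuot_inr bW bQ l, W.mapQ_apply]
    simp

theorem LinearMap.charpoly_eq_of_sub_mem_filtration {K V : Type*} [Field K] [AddCommGroup V]
    [Module K V] [Module.Finite K V] (f g : V →ₗ[K] V) (E : ℕ → Submodule K V) (n : ℕ)
    (hE₀ : E 0 = ⊤) (hEn : E n = ⊥) (hf : ∀ i, ∀ x ∈ E i, f x ∈ E i)
    (hg : ∀ i, ∀ x ∈ E i, g x ∈ E i) (hfg : ∀ i, ∀ x ∈ E i, f x - g x ∈ E (i + 1)) :
    f.charpoly = g.charpoly := by
  induction n generalizing V with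
  | zero =>
    congr 1
    ext x
    have hx : x ∈ E 0 := hE₀ ▸ Submodule.mem_top
    obtain rfl : x = 0 := by rwa [hEn, Submodule.mem_bot] at hx
    simp
  | succ n ih =>
    let W := E 1
    have hquot : W.mapQ W f (hf 1) = W.mapQ W g (hg 1) := by
      ext x
      simpa [Submodule.Quotient.eq] using hfg 0 x (hE₀ ▸ Submodule.mem_top)
    have hrestrict : (f.restrict (hf 1)).charpoly = (g.restrict (hg 1)).charpoly := by
      refine ih (f.restrict (hf 1)) (g.restrict (hg 1)) (fun i ↦ (E (i + 1)).comap W.subtype)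
        (by simp [W]) (by simp [hEn]) ?_ ?_ ?_ <;> intro i x hx
      · exact hf (i + 1) x hx
      · exact hg (i + 1) x hx
      · exact hfg (i + 1) x hx
    rw [f.charpoly_eq_charpoly_restrict_mul_charpoly_mapQ W (hf 1),
      g.charpoly_eq_charpoly_restrict_mul_charpoly_mapQ W (hg 1), hrestrict, hquot]

section

variable {R L : Type*} [CommRing R] [LieRing L] [LieAlgebra R L] (I : LieIdeal R L)

theorem LieIdeal.lcs_succ_le_map_incl (k : ℕ) :
    I.lcs L (k + 1) ≤ (I.lcs I k).map (LieSubmodule.incl I) := by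
  induction k with
  | zero => simpa using LieSubmodule.lie_le_left I ⊤
  | succ k ih =>
    rw [I.lcs_succ L (k + 1), I.lcs_succ I k, LieSubmodule.map_bracket_eq]
    exact LieSubmodule.mono_lie_right I ih

theorem LieIdeal.lieModule_isNilpotent_of_isNilpotent [LieRing.IsNilpotent I] :
    LieModule.IsNilpotent I L := by
  obtain ⟨k, hk⟩ := LieModule.IsNilpotent.nilpotent R I I
  have hI : I.lcs I k = ⊥ := by
    rw [← LieSubmodule.toSubmodule_inj, I.coe_lcs_eq, hk]
    rfl
  refine (LieModule.isNilpotent_iff R I L).mpr ⟨k + 1, ?_⟩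
  rw [← LieSubmodule.toSubmodule_eq_bot, ← I.coe_lcs_eq, LieSubmodule.toSubmodule_eq_bot,
    eq_bot_iff]
  simpa [hI] using I.lcs_succ_le_map_incl k

end

theorem LieModule.charpoly_toEnd_add_eq_of_mem {K L M : Type*} [Field K] [LieRing L]
    [LieAlgebra K L] [AddCommGroup M] [Module K M] [Module.Finite K M] [LieRingModule L M]
    [LieModule K L M] {I : LieIdeal K L} [LieModule.IsNilpotent I M] (x : L) {y : L}
    (hy : y ∈ I) :
    (toEnd K L M (x + y)).charpoly = (toEnd K L M x).charpoly := by
  obtain ⟨n, hn⟩ := LieModule.IsNilpotent.nilpotent K I M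
  refine LinearMap.charpoly_eq_of_sub_mem_filtration _ _ (fun i ↦ I.lcs M i) n rfl ?_
    (fun i m hm ↦ (I.lcs M i).lie_mem hm) (fun i m hm ↦ (I.lcs M i).lie_mem hm) ?_
  · rw [I.coe_lcs_eq, hn]
    rfl
  · intro i m hm
    simpa [add_lie, I.lcs_succ] using LieSubmodule.lie_mem_lie hy hm

theorem charpoly_ad_eq_of_nilradical_component_general
    (g : Type*) [LieRing g] [LieAlgebra ℝ g] [Module.Finite ℝ g]
    (k : Submodule ℝ g)
    (N : LieIdeal ℝ g) (hN : LieRing.IsNilpotent N) (hkN : ∀ z ∈ k, z ∈ N)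
    (X Xk Xm : g) (hXk : Xk ∈ k) (hX : X = Xk + Xm) :
    (LieAlgebra.ad ℝ g X).charpoly = (LieAlgebra.ad ℝ g Xm).charpoly ∧
    (∀ t : ℝ, t ≠ 0 →
      (((LieAlgebra.ad ℝ g X).charpoly.map (algebraMap ℝ ℂ)).IsRoot (t * Complex.I) →
       ((LieAlgebra.ad ℝ g Xm).charpoly.map (algebraMap ℝ ℂ)).IsRoot (t * Complex.I))) := by
  have : LieModule.IsNilpotent N g := N.lieModule_isNilpotent_of_isNilpotent
  have hcharpoly : (LieAlgebra.ad ℝ g X).charpoly = (LieAlgebra.ad ℝ g Xm).charpoly := by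
    rw [hX, add_comm]
    exact LieModule.charpoly_toEnd_add_eq_of_mem Xm (hkN Xk hXk)
  exact ⟨hcharpoly, fun _ _ ↦ hcharpoly ▸ id⟩

/-- Let `g` be a finite-dimensional solvable real Lie algebra with involutive automorphism
`σ`, `m` its `(−1)`-eigenspace, and `k = [m,m]`.  If `k` is contained in a nilpotent ideal
(the nilradical), then for `X = X_k + X_m` with `X_k ∈ k`, `X_m ∈ m`, the characteristic
polynomial of `ad X` equals that of `ad X_m`; in particular `ad X` has a purely imaginary
nonzero eigenvalue only if `ad X_m` does. -/
theorem charpoly_ad_eq_of_nilradical_component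
    (g : Type*) [LieRing g] [LieAlgebra ℝ g] [Module.Finite ℝ g]
    [LieAlgebra.IsSolvable g]
    (σ : g →ₗ⁅ℝ⁆ g) (hinv : ∀ x, σ (σ x) = x)
    (k : Submodule ℝ g)
    (hk : k = Submodule.span ℝ {z | ∃ x y : g, σ x = -x ∧ σ y = -y ∧ z = ⁅x, y⁆})
    (N : LieIdeal ℝ g) (hN : LieRing.IsNilpotent N) (hkN : ∀ z ∈ k, z ∈ N)
    (X Xk Xm : g) (hXk : Xk ∈ k) (hXm : σ Xm = -Xm) (hX : X = Xk + Xm) :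
    (LieAlgebra.ad ℝ g X).charpoly = (LieAlgebra.ad ℝ g Xm).charpoly ∧
    (∀ t : ℝ, t ≠ 0 →
      (((LieAlgebra.ad ℝ g X).charpoly.map (algebraMap ℝ ℂ)).IsRoot (t * Complex.I) →
       ((LieAlgebra.ad ℝ g Xm).charpoly.map (algebraMap ℝ ℂ)).IsRoot (t * Complex.I))) :=
  charpoly_ad_eq_of_nilradical_component_general g k N hN hkN X Xk Xm hXk hX
end

section
/- Consider ℝ² with the symmetric space structure given by s_{(a,b)}(a',b') = (2a − a', 2cosh(a − a')·b − b'). Then every pair of points has a unique midpoint, i.e., for all p, q ∈ ℝ² there is a unique z ∈ ℝ² with s_z(p) = q. -/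
/-- The symmetry of the exponential solvable symmetric space `ℝ²`:
`s_{(a,b)}(a',b') = (2a − a', 2cosh(a − a')·b − b')`. -/
noncomputable def symCosh (z p : ℝ × ℝ) : ℝ × ℝ :=
  (2 * z.1 - p.1, 2 * Real.cosh (z.1 - p.1) * z.2 - p.2)

/-- The division never meets the `x / 0 = 0` convention, since `cosh > 0`. -/
noncomputable def symCoshMidpoint (p q : ℝ × ℝ) : ℝ × ℝ :=
  ((p.1 + q.1) / 2, (p.2 + q.2) / (2 * Real.cosh ((q.1 - p.1) / 2)))

theorem symCosh_symCoshMidpoint (p q : ℝ × ℝ) : symCosh (symCoshMidpoint p q) p = q := by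
  have hcosh : Real.cosh ((q.1 - p.1) / 2) ≠ 0 := (Real.cosh_pos _).ne'
  have hshift : (p.1 + q.1) / 2 - p.1 = (q.1 - p.1) / 2 := by ring
  refine Prod.ext ?_ ?_
  · simp only [symCosh, symCoshMidpoint]
    ring
  · simp only [symCosh, symCoshMidpoint, hshift]
    field_simp
    ring

theorem eq_symCoshMidpoint_of_symCosh_eq {z p q : ℝ × ℝ} (h : symCosh z p = q) :
    z = symCoshMidpoint p q := by
  subst h
  have hcosh : Real.cosh (z.1 - p.1) ≠ 0 := (Real.cosh_pos _).ne'
  have hshift : (2 * z.1 - p.1 - p.1) / 2 = z.1 - p.1 := by ring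
  refine Prod.ext ?_ ?_
  · simp only [symCosh, symCoshMidpoint]
    ring
  · simp only [symCosh, symCoshMidpoint, hshift]
    field_simp
    ring

/-- In the symmetric space `ℝ²` with symmetries
`s_{(a,b)}(a',b') = (2a − a', 2cosh(a − a')·b − b')`, every pair of points has a unique
midpoint. -/
theorem cosh_space_unique_midpoint (p q : ℝ × ℝ) : ∃! z : ℝ × ℝ, symCosh z p = q :=
  ⟨symCoshMidpoint p q, symCosh_symCoshMidpoint p q,
    fun _ => eq_symCoshMidpoint_of_symCosh_eq⟩
end

section
/- Let m be a Lie triple system. On g := m ⊕ span{L_{X,Y} : X,Y ∈ m} (where L_{X,Y} = [X,Y,·] ∈ End(m)), the bracket defined by [X,Y] = L_{X,Y}, [L_{X,Y}, Z] = L_{X,Y}Z = −[Z, L_{X,Y}], and [L_{X,Y}, L_{U,V}] = L_{L_{X,Y}U, V} + L_{U, L_{X,Y}V} for X,Y,Z,U,V ∈ m, is a Lie bracket, making g a Lie algebra (the standard embedding of m). -/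
/-!
Every `L_{X,Y}` is a derivation of the triple product (Lts3), and a derivation `D` satisfies
`[D, L_{u,v}] = L_{Du,v} + L_{u,Dv}`. Hence the span `𝔥` of the `L_{X,Y}` is closed under
commutators by any derivation, and `[(X,f),(Y,g)] = (fY - gX, L_{X,Y} + [f,g])` is a well-defined
bilinear bracket on `m × 𝔥`. The `m`-component of its Jacobi identity is the cyclic identity
(Lts2); the `𝔥`-component reduces, through the derivation formula and the skew-symmetry
`L_{X,Y} = -L_{Y,X}` coming from (Lts1), to the Jacobi identity in `End(m)`.
-/

attribute [local instance] LieRing.ofAssociativeRing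

namespace LieTripleSystem

variable {R M : Type*} [CommRing R] [AddCommGroup M] [Module R M]
  (T : M →ₗ[R] M →ₗ[R] M →ₗ[R] M)

theorem apply_eq_neg_swap (hT : ∀ x y, T x x y = 0) (x y : M) : T x y = -T y x := by
  rw [eq_neg_iff_add_eq_zero]
  ext z
  have h := hT (x + y) z
  simp only [map_add, LinearMap.add_apply, hT, zero_add, add_zero] at h
  rwa [LinearMap.add_apply, LinearMap.zero_apply, add_comm]

def IsDerivation (D : Module.End R M) : Prop :=
  ∀ u v w, D (T u v w) = T (D u) v w + T u (D v) w + T u v (D w)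

def derivations : Submodule R (Module.End R M) where
  carrier := {D | IsDerivation T D}
  add_mem' {D E} hD hE u v w := by
    simp only [LinearMap.add_apply, map_add, hD u v w, hE u v w]
    abel
  zero_mem' u v w := by simp
  smul_mem' c D hD u v w := by
    simp only [LinearMap.smul_apply, map_smul, hD u v w, smul_add]

theorem mem_derivations {D : Module.End R M} : D ∈ derivations T ↔ IsDerivation T D :=
  Iff.rfl

abbrev innerDerivations : Submodule R (Module.End R M) :=
  Submodule.span R {f | ∃ X Y, f = T X Y}

variable {T}

theorem lie_apply_of_mem_derivations {D : Module.End R M} (hD : D ∈ derivations T) (u v : M) :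
    ⁅D, T u v⁆ = T (D u) v + T u (D v) := by
  ext w
  simp only [Ring.lie_def, LinearMap.sub_apply, Module.End.mul_apply, LinearMap.add_apply,
    hD u v w]
  abel

theorem innerDerivations_le_derivations (hT : ∀ x y, IsDerivation T (T x y)) :
    innerDerivations T ≤ derivations T :=
  Submodule.span_le.mpr fun _ ⟨x, y, hf⟩ ↦ hf ▸ (mem_derivations T).mpr (hT x y)

theorem lie_mem_innerDerivations {D f : Module.End R M} (hD : D ∈ derivations T)
    (hf : f ∈ innerDerivations T) : ⁅D, f⁆ ∈ innerDerivations T := by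
  induction hf using Submodule.span_induction with
  | mem f hf =>
    obtain ⟨u, v, rfl⟩ := hf
    rw [lie_apply_of_mem_derivations hD]
    exact add_mem (Submodule.subset_span ⟨_, _, rfl⟩) (Submodule.subset_span ⟨_, _, rfl⟩)
  | zero => simp
  | add f g _ _ hf hg => simpa only [lie_add] using add_mem hf hg
  | smul c f _ hf => simpa only [lie_smul] using Submodule.smul_mem _ c hf

variable (hT : ∀ x y, IsDerivation T (T x y))

def standardBracket :
    (M × innerDerivations T) →ₗ[R] (M × innerDerivations T) →ₗ[R]
      (M × innerDerivations T) :=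
  LinearMap.mk₂ R
    (fun p q ↦ ((p.2 : Module.End R M) q.1 - (q.2 : Module.End R M) p.1,
      ⟨T p.1 q.1 + ⁅(p.2 : Module.End R M), (q.2 : Module.End R M)⁆,
        add_mem (Submodule.subset_span ⟨_, _, rfl⟩)
          (lie_mem_innerDerivations (innerDerivations_le_derivations hT p.2.2) q.2.2)⟩))
    (fun p p' q ↦
      Prod.ext (by simp [sub_add_sub_comm]) (Subtype.ext (by simp [add_add_add_comm])))
    (fun c p q ↦ Prod.ext (by simp [smul_sub]) (Subtype.ext (by simp)))
    (fun p q q' ↦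
      Prod.ext (by simp [sub_add_sub_comm]) (Subtype.ext (by simp [add_add_add_comm])))
    (fun c p q ↦ Prod.ext (by simp [smul_sub]) (Subtype.ext (by simp)))

@[simp]
theorem standardBracket_apply_fst (p q : M × innerDerivations T) :
    (standardBracket hT p q).1 = (p.2 : Module.End R M) q.1 - (q.2 : Module.End R M) p.1 :=
  rfl

@[simp]
theorem coe_standardBracket_apply_snd (p q : M × innerDerivations T) :
    ((standardBracket hT p q).2 : Module.End R M) =
      T p.1 q.1 + ⁅(p.2 : Module.End R M), (q.2 : Module.End R M)⁆ :=
  rfl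

theorem standardBracket_self (hT₁ : ∀ x y, T x x y = 0) (p : M × innerDerivations T) :
    standardBracket hT p p = 0 := by
  refine Prod.ext (by simp) (Subtype.ext ?_)
  ext
  simp [hT₁]

theorem standardBracket_jacobi (hT₁ : ∀ x y, T x x y = 0)
    (hT₂ : ∀ x y z, T x y z + T y z x + T z x y = 0) (p q r : M × innerDerivations T) :
    standardBracket hT (standardBracket hT p q) r + standardBracket hT (standardBracket hT q r) p
      + standardBracket hT (standardBracket hT r p) q = 0 := by
  obtain ⟨X, f, hf⟩ := p
  obtain ⟨Y, g, hg⟩ := q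
  obtain ⟨Z, h, hh⟩ := r
  refine Prod.ext ?_ (Subtype.ext ?_)
  · simp only [Prod.fst_add, standardBracket_apply_fst, coe_standardBracket_apply_snd,
      LinearMap.add_apply, Ring.lie_def, LinearMap.sub_apply, Module.End.mul_apply, map_sub,
      Prod.fst_zero]
    rw [← hT₂ X Y Z]
    abel
  · have hD : ∀ {D}, D ∈ innerDerivations T →
        ∀ u v, ⁅T u v, D⁆ = -(T (D u) v + T u (D v)) := fun hD u v ↦ by
      rw [← lie_skew, lie_apply_of_mem_derivations (innerDerivations_le_derivations hT hD)]
    simp only [Prod.snd_add, Submodule.coe_add, coe_standardBracket_apply_snd,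
      standardBracket_apply_fst, add_lie, hD hf, hD hg, hD hh, map_sub, LinearMap.sub_apply,
      Prod.snd_zero, ZeroMemClass.coe_zero]
    rw [apply_eq_neg_swap T hT₁ X (h Y), apply_eq_neg_swap T hT₁ Y (f Z),
      apply_eq_neg_swap T hT₁ Z (g X)]
    simp only [Ring.lie_def, sub_mul, mul_sub, mul_assoc]
    abel

end LieTripleSystem

open LieTripleSystem

/-- Standard embedding of a Lie triple system `m`: on `g = m ⊕ [m,m]`, where
`[m,m] = span{L_{X,Y} = [X,Y,·]} ⊆ End(m)`, the bracket determined by `[X,Y] = L_{X,Y}`,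
`[L_{X,Y},Z] = L_{X,Y}Z = −[Z,L_{X,Y}]` and `[L_{X,Y},L_{U,V}] = L_{L_{X,Y}U,V} +
L_{U,L_{X,Y}V}` is a Lie bracket (bilinear, alternating, Jacobi). -/
theorem standard_embedding_is_lie_bracket
    (m : Type*) [AddCommGroup m] [Module ℝ m]
    (T : m →ₗ[ℝ] m →ₗ[ℝ] m →ₗ[ℝ] m)
    (lts1 : ∀ x y, T x x y = 0)
    (lts2 : ∀ x y z, T x y z + T y z x + T z x y = 0)
    (lts3 : ∀ x y u v w,
      T x y (T u v w) = T (T x y u) v w + T u (T x y v) w + T u v (T x y w)) :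
    ∃ b : (m × (Submodule.span ℝ {f : m →ₗ[ℝ] m | ∃ X Y, f = T X Y})) →
          (m × (Submodule.span ℝ {f : m →ₗ[ℝ] m | ∃ X Y, f = T X Y})) →
          (m × (Submodule.span ℝ {f : m →ₗ[ℝ] m | ∃ X Y, f = T X Y})),
      -- bilinearity
      (∀ p p' q, b (p + p') q = b p q + b p' q) ∧
      (∀ (c : ℝ) p q, b (c • p) q = c • b p q) ∧
      (∀ p q q', b p (q + q') = b p q + b p q') ∧
      (∀ (c : ℝ) p q, b p (c • q) = c • b p q) ∧
      -- alternating (hence antisymmetric)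
      (∀ p, b p p = 0) ∧
      -- Jacobi identity
      (∀ p q r, b (b p q) r + b (b q r) p + b (b r p) q = 0) ∧
      -- the defining values of the bracket on generators
      (∀ X Y : m, b (X, 0) (Y, 0) =
        (0, ⟨T X Y, Submodule.subset_span ⟨X, Y, rfl⟩⟩)) ∧
      (∀ X Y Z : m,
        b (0, ⟨T X Y, Submodule.subset_span ⟨X, Y, rfl⟩⟩) (Z, 0) = (T X Y Z, 0)) ∧
      (∀ X Y U V : m,
        b (0, ⟨T X Y, Submodule.subset_span ⟨X, Y, rfl⟩⟩)
          (0, ⟨T U V, Submodule.subset_span ⟨U, V, rfl⟩⟩) =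
        (0, ⟨T (T X Y U) V + T U (T X Y V),
             Submodule.add_mem _ (Submodule.subset_span ⟨T X Y U, V, rfl⟩)
               (Submodule.subset_span ⟨U, T X Y V, rfl⟩)⟩)) := by
  have hT : ∀ x y, IsDerivation T (T x y) := lts3
  refine ⟨fun p q ↦ standardBracket hT p q, LinearMap.map_add₂ _, LinearMap.map_smul₂ _,
    fun p ↦ map_add _, fun c p ↦ map_smul _ c, standardBracket_self hT lts1,
    standardBracket_jacobi hT lts1 lts2, fun X Y ↦ ?_, fun X Y Z ↦ ?_, fun X Y U V ↦ ?_⟩ <;>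
    refine Prod.ext ?_ (Subtype.ext ?_)
  all_goals simp [lie_apply_of_mem_derivations ((mem_derivations T).mpr (hT _ _))]
end
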